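/- Let D = (K/F, Φ) be a crossed product division algebra with involution * satisfying K* ⊆ K, G = Gal(K/F), and standard basis (e_σ). Then the following are equivalent: (1) (k*)^σ = (k^σ)* for all k ∈ K and σ ∈ G; (2) e_σ*·e_σ ∈ K for all σ ∈ G; (3) f(e_τ*·e_σ) = 0 for all σ ≠ τ in G. -/

import Mathlib

/-!
Applying the involution to `k e_σ = e_σ k^σ` gives `(k^σ)* e_σ* = e_σ* k*`. Comparing
coefficients, the `e_π`-coefficient `c_π` of `e_σ*` satisfies `((k^σ)*)^π c_π = c_π k*`, so by
faithfulness of the Galois action, (1) for `σ` holds exactly when `e_σ*` is a multiple of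
`e_{σ⁻¹}`. This normal form makes `e_σ* e_σ` a scalar, and conversely a scalar `e_σ* e_σ` forces
(1) by multiplying the identity above by `e_σ`. Finally the `e_id`-coefficient of `d e_σ` is a
nonzero multiple of the `e_{σ⁻¹}`-coefficient of `d`, so (3) for `τ` says precisely that `e_τ*`
is supported at `τ⁻¹`.
-/

/-- An involution on a ring: an additive, anti-multiplicative map of order at most 2. -/
def IsInvolution {R : Type*} [Ring R] (τ : R → R) : Prop :=
  (∀ a b : R, τ (a + b) = τ a + τ b) ∧ (∀ a b : R, τ (a * b) = τ b * τ a) ∧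
    (∀ a : R, τ (τ a) = a)

theorem IsInvolution.map_zero {R : Type*} [Ring R] {τ : R → R} (h : IsInvolution τ) :
    τ 0 = 0 := by
  have h00 := h.1 0 0
  rw [add_zero] at h00
  exact left_eq_add.mp h00

theorem IsInvolution.map_ne_zero {R : Type*} [Ring R] {τ : R → R} (h : IsInvolution τ)
    {a : R} (ha : a ≠ 0) : τ a ≠ 0 :=
  fun h0 => ha (by rw [← h.2.2 a, h0, h.map_zero])

section CrossedProduct

variable {K D G : Type*} [Field K] [DivisionRing D] [Group G] [Fintype G] [MulSemiringAction G K]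

structure IsCrossedProductBasis (ι : K →+* D) (e : G → D) : Prop where
  existsUnique_coeff : ∀ d : D, ∃! c : G → K, d = ∑ σ, e σ * ι (c σ)
  ι_mul : ∀ (k : K) (σ : G), ι k * e σ = e σ * ι (σ • k)

theorem invoK_invoK {ι : K →+* D} {invo : D → D} {invoK : K → K} (hinvo : IsInvolution invo)
    (hinvoK : ∀ k, invo (ι k) = ι (invoK k)) (k : K) : invoK (invoK k) = k :=
  ι.injective (by rw [← hinvoK, ← hinvoK, hinvo.2.2])

namespace IsCrossedProductBasis

variable {ι : K →+* D} {e : G → D}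

noncomputable def coeff (hB : IsCrossedProductBasis ι e) (d : D) : G → K :=
  (hB.existsUnique_coeff d).exists.choose

theorem sum_coeff (hB : IsCrossedProductBasis ι e) (d : D) :
    ∑ σ, e σ * ι (hB.coeff d σ) = d :=
  (hB.existsUnique_coeff d).exists.choose_spec.symm

theorem coeff_sum (hB : IsCrossedProductBasis ι e) (c : G → K) :
    hB.coeff (∑ σ, e σ * ι (c σ)) = c :=
  (hB.existsUnique_coeff _).unique (hB.sum_coeff _).symm rfl

theorem coeff_injective (hB : IsCrossedProductBasis ι e) : Function.Injective hB.coeff :=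
  fun d d' h => by rw [← hB.sum_coeff d, ← hB.sum_coeff d', h]

theorem coeff_basis_mul [DecidableEq G] (hB : IsCrossedProductBasis ι e) (π : G) (k : K) :
    hB.coeff (e π * ι k) = Pi.single π k := by
  have : e π * ι k = ∑ σ, e σ * ι ((Pi.single π k : G → K) σ) := by
    rw [Fintype.sum_eq_single π fun σ hσ => by simp [hσ]]
    simp
  rw [this, hB.coeff_sum]

theorem basis_ne_zero (hB : IsCrossedProductBasis ι e) (σ : G) : e σ ≠ 0 := by
  classical
  intro h
  have := congrFun (hB.coeff_basis_mul σ 1) σ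
  rw [h, zero_mul, ← zero_mul (ι 0), ← h, hB.coeff_basis_mul] at this
  simp at this

theorem coeff_ι_mul (hB : IsCrossedProductBasis ι e) (a : K) (d : D) (π : G) :
    hB.coeff (ι a * d) π = π • a * hB.coeff d π := by
  conv_lhs => rw [← hB.sum_coeff d, Finset.mul_sum]
  simp_rw [← mul_assoc, hB.ι_mul, mul_assoc, ← map_mul]
  rw [hB.coeff_sum]

theorem coeff_mul_ι (hB : IsCrossedProductBasis ι e) (d : D) (b : K) (π : G) :
    hB.coeff (d * ι b) π = hB.coeff d π * b := by
  conv_lhs => rw [← hB.sum_coeff d, Finset.sum_mul]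
  simp_rw [mul_assoc, ← map_mul]
  rw [hB.coeff_sum]

theorem smul_mul_coeff_of_ι_mul_eq (hB : IsCrossedProductBasis ι e) {a b : K} {d : D}
    (h : ι a * d = d * ι b) (π : G) : π • a * hB.coeff d π = hB.coeff d π * b := by
  rw [← hB.coeff_ι_mul, ← hB.coeff_mul_ι, h]

theorem coeff_eq_zero_of_ι_mul_eq [FaithfulSMul G K] (hB : IsCrossedProductBasis ι e)
    {d : D} {g π : G} (h : ∀ k, ι k * d = d * ι (g • k)) (hπ : π ≠ g) : hB.coeff d π = 0 := by
  obtain ⟨k, hk⟩ : ∃ k : K, π • k ≠ g • k := by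
    by_contra! hall
    exact hπ (FaithfulSMul.eq_of_smul_eq_smul hall)
  have := hB.smul_mul_coeff_of_ι_mul_eq (h k) π
  rw [mul_comm] at this
  exact (mul_eq_mul_left_iff.mp this).resolve_left hk

theorem eq_basis_mul_of_coeff_eq_zero (hB : IsCrossedProductBasis ι e) {d : D} {g : G}
    (h : ∀ π ≠ g, hB.coeff d π = 0) : d = e g * ι (hB.coeff d g) := by
  classical
  refine hB.coeff_injective (funext fun π => ?_)
  rw [hB.coeff_basis_mul]
  by_cases hπ : π = g
  · subst hπ; simp
  · simp [hπ, h π hπ]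

/-- The factor set `Φ` of the crossed product. -/
noncomputable def cocycle (hB : IsCrossedProductBasis ι e) (ρ σ : G) : K :=
  hB.coeff (e ρ * e σ) (σ * ρ)

theorem basis_mul_basis [FaithfulSMul G K] (hB : IsCrossedProductBasis ι e) (ρ σ : G) :
    e ρ * e σ = e (σ * ρ) * ι (hB.cocycle ρ σ) := by
  refine hB.eq_basis_mul_of_coeff_eq_zero fun π hπ => hB.coeff_eq_zero_of_ι_mul_eq
    (fun k => ?_) hπ
  rw [← mul_assoc, hB.ι_mul, mul_assoc, hB.ι_mul, ← mul_assoc, mul_smul]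

theorem cocycle_ne_zero [FaithfulSMul G K] (hB : IsCrossedProductBasis ι e) (ρ σ : G) :
    hB.cocycle ρ σ ≠ 0 := fun h0 =>
  mul_ne_zero (hB.basis_ne_zero ρ) (hB.basis_ne_zero σ)
    (by rw [hB.basis_mul_basis, h0, map_zero, mul_zero])

theorem coeff_mul_basis [FaithfulSMul G K] (hB : IsCrossedProductBasis ι e) (d : D)
    (σ π : G) :
    hB.coeff (d * e σ) π = hB.cocycle (σ⁻¹ * π) σ * σ • hB.coeff d (σ⁻¹ * π) := by
  have : d * e σ = ∑ π, e π * ι (hB.cocycle (σ⁻¹ * π) σ * σ • hB.coeff d (σ⁻¹ * π)) := by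
    conv_lhs => rw [← hB.sum_coeff d, Finset.sum_mul]
    refine Fintype.sum_equiv (Equiv.mulLeft σ) _ _ fun ρ => ?_
    rw [Equiv.coe_mulLeft, inv_mul_cancel_left, mul_assoc, hB.ι_mul, ← mul_assoc,
      hB.basis_mul_basis, mul_assoc, ← map_mul]
  rw [this, hB.coeff_sum]

theorem forall_coeff_mul_basis_one_eq_zero_iff [FaithfulSMul G K]
    (hB : IsCrossedProductBasis ι e) (d : D) (τ : G) :
    (∀ σ, σ ≠ τ → hB.coeff (d * e σ) 1 = 0) ↔ ∀ π, π ≠ τ⁻¹ → hB.coeff d π = 0 := by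
  simp only [hB.coeff_mul_basis, mul_one, mul_eq_zero, hB.cocycle_ne_zero, false_or,
    smul_eq_zero_iff_eq]
  exact ⟨fun h π hπ => by simpa using h π⁻¹ fun h' => hπ (by rw [← h', inv_inv]),
    fun h σ hσ => h σ⁻¹ (inv_injective.ne hσ)⟩

section Involution

variable {invo : D → D} {invoK : K → K}

theorem ι_invoK_smul_mul_invo_basis (hB : IsCrossedProductBasis ι e)
    (hinvo : IsInvolution invo) (hinvoK : ∀ k, invo (ι k) = ι (invoK k)) (σ : G) (k : K) :
    ι (invoK (σ • k)) * invo (e σ) = invo (e σ) * ι (invoK k) := by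
  rw [← hinvoK, ← hinvoK, ← hinvo.2.1, ← hinvo.2.1, hB.ι_mul]

theorem smul_invoK_iff_coeff_invo_basis_eq_zero [FaithfulSMul G K]
    (hB : IsCrossedProductBasis ι e) (hinvo : IsInvolution invo)
    (hinvoK : ∀ k, invo (ι k) = ι (invoK k)) (τ : G) :
    (∀ k, τ • invoK k = invoK (τ • k)) ↔ ∀ π ≠ τ⁻¹, hB.coeff (invo (e τ)) π = 0 := by
  constructor
  · refine fun hτ π hπ => hB.coeff_eq_zero_of_ι_mul_eq (fun k => ?_) hπ
    have := hB.ι_invoK_smul_mul_invo_basis hinvo hinvoK τ (invoK (τ⁻¹ • k))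
    rwa [← hτ, invoK_invoK hinvo hinvoK, smul_inv_smul] at this
  · intro h k
    have hc : hB.coeff (invo (e τ)) τ⁻¹ ≠ 0 := fun h0 =>
      hinvo.map_ne_zero (hB.basis_ne_zero τ)
        (by rw [hB.eq_basis_mul_of_coeff_eq_zero h, h0, map_zero, mul_zero])
    have := hB.smul_mul_coeff_of_ι_mul_eq (hB.ι_invoK_smul_mul_invo_basis hinvo hinvoK τ k) τ⁻¹
    rw [mul_comm, mul_right_inj' hc] at this
    rw [← this, smul_inv_smul]

theorem exists_invo_basis_mul_basis_eq_ι [FaithfulSMul G K] (hB : IsCrossedProductBasis ι e)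
    (he1 : e 1 = 1) {τ : G} (h : ∀ π ≠ τ⁻¹, hB.coeff (invo (e τ)) π = 0) :
    ∃ k, invo (e τ) * e τ = ι k := by
  refine ⟨hB.cocycle τ⁻¹ τ * τ • hB.coeff (invo (e τ)) τ⁻¹, ?_⟩
  conv_lhs => rw [hB.eq_basis_mul_of_coeff_eq_zero h]
  rw [mul_assoc, hB.ι_mul, ← mul_assoc, hB.basis_mul_basis, mul_inv_cancel, he1, one_mul,
    map_mul]

theorem smul_invoK_of_invo_basis_mul_basis_eq (hB : IsCrossedProductBasis ι e)
    (hinvo : IsInvolution invo) (hinvoK : ∀ k, invo (ι k) = ι (invoK k)) {τ : G} {m : K}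
    (hm : invo (e τ) * e τ = ι m) (k : K) : τ • invoK k = invoK (τ • k) := by
  have hm0 : m ≠ 0 := by
    rintro rfl
    exact mul_ne_zero (hinvo.map_ne_zero (hB.basis_ne_zero τ)) (hB.basis_ne_zero τ)
      (by rw [hm, map_zero])
  have h := congrArg (· * e τ) (hB.ι_invoK_smul_mul_invo_basis hinvo hinvoK τ k)
  rw [mul_assoc, hm, mul_assoc, hB.ι_mul, ← mul_assoc, hm, ← map_mul, ← map_mul] at h
  have := ι.injective h
  rw [mul_comm, mul_right_inj' hm0] at this
  exact this.symm

end Involution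

end IsCrossedProductBasis

end CrossedProduct

/-- Let `D = (K/F, Φ)` be a crossed product division algebra (right `K`-space with basis
`(e_σ)_{σ ∈ G}` and `k e_σ = e_σ k^σ`) with involution `*` leaving `K` invariant, and let
`f : D → K` be the coefficient-of-`e_id` projection.  The following are equivalent:
(1) `(k*)^σ = (k^σ)*` for all `k, σ`;
(2) `e_σ* e_σ ∈ K` for all `σ`;
(3) `f(e_τ* e_σ) = 0` whenever `σ ≠ τ`. -/
theorem stmt_15 {K D G : Type*} [Field K] [DivisionRing D]
    [Group G] [Fintype G] [MulSemiringAction G K]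
    (ι : K →+* D) (e : G → D)
    (hbasis : ∀ d : D, ∃! c : G → K, d = ∑ σ : G, e σ * ι (c σ))
    (hcomm : ∀ (k : K) (σ : G), ι k * e σ = e σ * ι (σ • k))
    (hfaith : ∀ σ τ : G, σ ≠ τ → ∃ k : K, σ • k ≠ τ • k)
    (he1 : e 1 = 1)
    (invo : D → D) (hinvo : IsInvolution invo)
    (invoK : K → K) (hinvoK : ∀ k, invo (ι k) = ι (invoK k))
    (f : D → K) (hf : ∀ c : G → K, f (∑ σ : G, e σ * ι (c σ)) = c 1) :
    ((∀ (k : K) (σ : G), σ • invoK k = invoK (σ • k)) ↔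
        (∀ σ : G, ∃ k : K, invo (e σ) * e σ = ι k)) ∧
    ((∀ (k : K) (σ : G), σ • invoK k = invoK (σ • k)) ↔
        (∀ σ τ : G, σ ≠ τ → f (invo (e τ) * e σ) = 0)) := by
  have : FaithfulSMul G K :=
    ⟨fun h => by_contra fun hne => (hfaith _ _ hne).elim fun k hk => hk (h k)⟩
  have hB : IsCrossedProductBasis ι e := ⟨hbasis, hcomm⟩
  have hf_coeff : ∀ d, f d = hB.coeff d 1 := fun d => by
    conv_lhs => rw [← hB.sum_coeff d]
    exact hf _
  have h1_iff_supp := hB.smul_invoK_iff_coeff_invo_basis_eq_zero hinvo hinvoK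
  have h1_iff_2 : ∀ τ : G, (∀ k, τ • invoK k = invoK (τ • k)) ↔ ∃ k, invo (e τ) * e τ = ι k :=
    fun τ => ⟨fun h => hB.exists_invo_basis_mul_basis_eq_ι he1 ((h1_iff_supp τ).mp h),
      fun ⟨_, hm⟩ => hB.smul_invoK_of_invo_basis_mul_basis_eq hinvo hinvoK hm⟩
  have h1_iff_3 : ∀ τ : G, (∀ k, τ • invoK k = invoK (τ • k)) ↔
      ∀ σ, σ ≠ τ → f (invo (e τ) * e σ) = 0 := fun τ => by
    simp only [hf_coeff]
    exact (h1_iff_supp τ).trans (hB.forall_coeff_mul_basis_one_eq_zero_iff _ τ).symm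
  exact ⟨forall_comm.trans (forall_congr' h1_iff_2),
    forall_comm.trans ((forall_congr' h1_iff_3).trans forall_comm)⟩
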